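/- Assume k < d. For every i ∈ {1,…,k−1}, the set 𝒯'_i is nonempty if and only if the binary vector v ∈ {0,1}^d with supp(v) = {1,…,i} ∪ {d−k+i+1, …, d} belongs to K(w). -/
import Mathlib


open Finset

lemma mono_gap {m : ℕ} (f : Fin m → ℕ) (hf : StrictMono f) :
    ∀ c : ℕ, ∀ a b : Fin m, (b : ℕ) = (a : ℕ) + c → f a + c ≤ f b := by
  intro c
  induction c with
  | zero =>
    intro a b h
    obtain rfl : a = b := Fin.ext (by omega)
    omega
  | succ c ih =>
    intro a b h
    have hb' : (a : ℕ) + c < m := by have := b.isLt; omega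
    have h1 := ih a ⟨(a : ℕ) + c, hb'⟩ rfl
    have h2 : f ⟨(a : ℕ) + c, hb'⟩ < f b := hf (by simp [Fin.lt_def]; omega)
    omega

lemma sum_eq_sum_fin {d m : ℕ} (w : Fin d → ℝ) (s : Finset (Fin d)) (h : s.card = m) :
    ∑ j ∈ s, w j = ∑ t : Fin m, w (s.orderEmbOfFin h t) := by
  rw [Finset.sum_bij (fun (t : Fin m) _ => s.orderEmbOfFin h t) ] <;> try intros
  · exact Finset.orderEmbOfFin_mem s h _
  · exact (s.orderEmbOfFin h).injective ‹_›
  · rename_i b hb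
    have := Finset.range_orderEmbOfFin s h
    have : (b : Fin d) ∈ Set.range (s.orderEmbOfFin h) := by rw [this]; exact hb
    obtain ⟨t, ht⟩ := this
    exact ⟨t, Finset.mem_univ t, ht⟩
  · rfl

lemma card_L (d m : ℕ) (hm : 0 < m) (hmd : m ≤ d) :
    (Finset.univ.filter (fun j : Fin d => d - m ≤ (j : ℕ))).card = m := by
  have hdm : d - m < d := by omega
  have : (Finset.univ.filter (fun j : Fin d => d - m ≤ (j : ℕ))) = Finset.Ici (⟨d - m, hdm⟩ : Fin d) := by
    ext j; simp [Fin.le_def]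
  rw [this, Fin.card_Ici]
  simp; omega

lemma key (d m : ℕ) (hm : 0 < m) (hmd : m ≤ d) (w : Fin d → ℝ) (hw : Antitone w)
    (R : Finset (Fin d)) (hR : R.card = m) :
    ∑ j ∈ Finset.univ.filter (fun j : Fin d => d - m ≤ (j : ℕ)), w j ≤ ∑ j ∈ R, w j := by
  have hmemL : ∀ x ∈ Finset.univ.filter (fun j : Fin d => d - m ≤ (j : ℕ)), d - m ≤ (x : ℕ) :=
    fun x hx => (Finset.mem_filter.mp hx).2
  have hL := card_L d m hm hmd
  rw [sum_eq_sum_fin w _ hL, sum_eq_sum_fin w R hR]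
  apply Finset.sum_le_sum
  intro t _
  apply hw
  have hfmono : StrictMono (fun u : Fin m => ((R.orderEmbOfFin hR u : Fin d) : ℕ)) :=
    fun a b hab => (R.orderEmbOfFin hR).strictMono hab
  have hgmono : StrictMono (fun u : Fin m =>
      ((((Finset.univ.filter (fun j : Fin d => d - m ≤ (j : ℕ))).orderEmbOfFin hL) u : Fin d) : ℕ)) :=
    fun a b hab => (Finset.orderEmbOfFin _ hL).strictMono hab
  have h1 : ((R.orderEmbOfFin hR t : Fin d) : ℕ) + (m - 1 - (t : ℕ)) ≤
      ((R.orderEmbOfFin hR ⟨m - 1, by omega⟩ : Fin d) : ℕ) :=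
    mono_gap _ hfmono (m - 1 - (t : ℕ)) t ⟨m - 1, by omega⟩ (by simp; omega)
  have h2 : ((R.orderEmbOfFin hR ⟨m - 1, by omega⟩ : Fin d) : ℕ) < d :=
    (R.orderEmbOfFin hR _).isLt
  have h3 : (((Finset.univ.filter (fun j : Fin d => d - m ≤ (j : ℕ))).orderEmbOfFin hL ⟨0, hm⟩ : Fin d) : ℕ) + (t : ℕ) ≤
      (((Finset.univ.filter (fun j : Fin d => d - m ≤ (j : ℕ))).orderEmbOfFin hL t : Fin d) : ℕ) :=
    mono_gap _ hgmono (t : ℕ) ⟨0, hm⟩ t (by simp)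
  have h4 : d - m ≤ (((Finset.univ.filter (fun j : Fin d => d - m ≤ (j : ℕ))).orderEmbOfFin hL ⟨0, hm⟩ : Fin d) : ℕ) :=
    hmemL _ (Finset.orderEmbOfFin_mem _ hL ⟨0, hm⟩)
  have ht := t.isLt
  exact Fin.le_def.mpr (by omega)

lemma sum_supp {d : ℕ} (w x : Fin d → ℝ) (hx : ∀ i, x i = 0 ∨ x i = 1) :
    ∑ i, w i * x i = ∑ j ∈ Finset.univ.filter (fun i => x i ≠ 0), w j := by
  rw [← Finset.sum_filter_of_ne (p := fun i => x i ≠ 0)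
    (by intro i _ h h0; exact h (by rw [h0, mul_zero]))]
  apply Finset.sum_congr rfl
  intro j hj
  have := (hx j).resolve_left (Finset.mem_filter.mp hj).2
  rw [this, mul_one]


/-- Support of a vector, as a finset. -/
noncomputable def suppF {d : ℕ} (x : Fin d → ℝ) : Finset (Fin d) :=
  Finset.univ.filter fun i => x i ≠ 0

/-- `∑_{i=1}^k w_i`, the sum of the `k` first (= `k` largest, since `w` is
strictly decreasing) entries of `w`. -/
noncomputable def topSum (d k : ℕ) (w : Fin d → ℝ) : ℝ :=
  ∑ i ∈ Finset.univ.filter (fun i : Fin d => (i : ℕ) < k), w i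

/-- The `k`-cardinality binary knapsack set
`K(w) := {x ∈ {0,1}^d : ∑ w_i x_i < c(w), |supp x| ≤ k}` with
`c(w) := ∑_{i=1}^k w_i − t`. -/
def Kset (d k : ℕ) (w : Fin d → ℝ) (t : ℝ) : Set (Fin d → ℝ) :=
  {x | (∀ i, x i = 0 ∨ x i = 1) ∧
       ∑ i, w i * x i < topSum d k w - t ∧
       (suppF x).card ≤ k}

/-- `𝒯'_i := {y ∈ K(w) : |supp y| = k, {1,…,i} ⊆ supp y, i+1 ∉ supp y}`
(here `i` is a 1-indexed position, so `{1,…,i}` is `{j : (j : ℕ) < i}` and the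
`(i+1)`-st index is the `j : Fin d` with `(j : ℕ) = i`). -/
def Tset' (d k : ℕ) (w : Fin d → ℝ) (t : ℝ) (i : ℕ) : Set (Fin d → ℝ) :=
  {y | y ∈ Kset d k w t ∧ (suppF y).card = k ∧
       (∀ j : Fin d, (j : ℕ) < i → j ∈ suppF y) ∧
       ∀ j : Fin d, (j : ℕ) = i → j ∉ suppF y}

theorem stmt_15 (d k : ℕ) (hk1 : 1 ≤ k) (hkd : k < d)
    (w : Fin d → ℝ) (hw : StrictAnti w) (t : ℝ) :
    ∀ i : ℕ, 1 ≤ i → i ≤ k - 1 →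
      ((Tset' d k w t i).Nonempty ↔
        (fun j : Fin d => if (j : ℕ) < i ∨ d - k + i ≤ (j : ℕ) then (1 : ℝ) else 0)
          ∈ Kset d k w t) := by
  intro i hi1 hik
  have hik' : i < k := by omega
  set v : Fin d → ℝ := fun j => if (j : ℕ) < i ∨ d - k + i ≤ (j : ℕ) then (1 : ℝ) else 0 with hv
  have hbin : ∀ j, v j = 0 ∨ v j = 1 := by
    intro j; by_cases h : (j : ℕ) < i ∨ d - k + i ≤ (j : ℕ) <;> simp [hv, h]
  have hsupp : suppF v = Finset.univ.filter (fun j : Fin d => (j : ℕ) < i ∨ d - k + i ≤ (j : ℕ)) := by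
    apply Finset.filter_congr
    intro j _
    by_cases h : (j : ℕ) < i ∨ d - k + i ≤ (j : ℕ) <;> simp [hv, h]
  set A : Finset (Fin d) := Finset.univ.filter (fun j : Fin d => (j : ℕ) < i) with hA
  set L : Finset (Fin d) := Finset.univ.filter (fun j : Fin d => d - k + i ≤ (j : ℕ)) with hL
  have hsupp2 : suppF v = A ∪ L := by
    rw [hsupp, hA, hL, ← Finset.filter_or]
  have hdisj : Disjoint A L := by
    rw [Finset.disjoint_left]
    intro a ha hb
    rw [hA, Finset.mem_filter] at ha
    rw [hL, Finset.mem_filter] at hb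
    omega
  have hcardA : A.card = i := by
    have hid : i < d := by omega
    have : A = Finset.Iio (⟨i, hid⟩ : Fin d) := by
      ext j; simp [hA, Fin.lt_def]
    rw [this, Fin.card_Iio]
  have hLL : L = Finset.univ.filter (fun j : Fin d => d - (k - i) ≤ (j : ℕ)) := by
    rw [hL]; apply Finset.filter_congr; intro j _
    have : d - k + i = d - (k - i) := by omega
    rw [this]
  have hcardL : L.card = k - i := by
    rw [hLL]; exact card_L d (k - i) (by omega) (by omega)
  have hcardv : (suppF v).card = k := by
    rw [hsupp2, Finset.card_union_of_disjoint hdisj, hcardA, hcardL]; omega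
  constructor
  · rintro ⟨y, ⟨⟨hybin, hysum, _⟩, hycard, hsub, -⟩⟩
    refine ⟨hbin, ?_, by rw [hcardv]⟩
    have hAy : A ⊆ suppF y := by
      intro a ha
      exact hsub a (Finset.mem_filter.mp ha).2
    set R : Finset (Fin d) := suppF y \ A with hR
    have hcardR : R.card = k - i := by
      rw [hR, Finset.card_sdiff_of_subset hAy, hycard, hcardA]
    have hkey : ∑ j ∈ L, w j ≤ ∑ j ∈ R, w j := by
      rw [hLL]
      exact key d (k - i) (by omega) (by omega) w hw.antitone R hcardR
    have e1 : ∑ j, w j * v j = ∑ j ∈ A, w j + ∑ j ∈ L, w j := by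
      rw [sum_supp w v hbin]
      have : Finset.univ.filter (fun j => v j ≠ 0) = suppF v := rfl
      rw [this, hsupp2, Finset.sum_union hdisj]
    have e2 : ∑ j, w j * y j = ∑ j ∈ A, w j + ∑ j ∈ R, w j := by
      rw [sum_supp w y hybin]
      have : Finset.univ.filter (fun j => y j ≠ 0) = suppF y := rfl
      rw [this, hR, ← Finset.sum_sdiff hAy]
      ring
    rw [e1]
    rw [e2] at hysum
    linarith
  · intro hvK
    refine ⟨v, hvK, hcardv, ?_, ?_⟩
    · intro j hj
      rw [hsupp, Finset.mem_filter]
      exact ⟨Finset.mem_univ j, Or.inl hj⟩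
    · intro j hj
      rw [hsupp, Finset.mem_filter]
      push_neg
      intro _
      omega
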